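/- arXiv:2311.05292 — 3 statements merged into one kernel-verified Lean document; each statement's English description precedes it below -/
import Mathlib

section
/- For a positive odd integer k, the function Z(X) = X^2(1 + e^{−πX}) / ((k^2 + X^2)(1 − e^{−πX})) is strictly monotonically increasing on (0, ∞). -/
open Real Set

/-! Multiplying numerator and denominator by `exp (π X / 2)` turns `Z` into
`X ^ 2 * cosh (π X / 2) / ((k ^ 2 + X ^ 2) * sinh (π X / 2))`, whose derivative has the sign of
`2 k ^ 2 sinh (π X) - π X (k ^ 2 + X ^ 2)`. The bound `sinh t ≥ t + t ^ 3 / 6` makes this positive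
as soon as `3 ≤ k ^ 2 π ^ 2`, i.e. for every `k ≥ 1`. -/

theorem Real.add_pow_three_div_six_le_sinh {t : ℝ} (ht : 0 ≤ t) : t + t ^ 3 / 6 ≤ sinh t := by
  have h := sum_le_hasSum (Finset.range 2) (fun n _ => by positivity) (hasSum_sinh t)
  norm_num [Finset.sum_range_succ, Nat.factorial] at h
  linarith

theorem mul_add_sq_lt_two_mul_mul_sinh {a c x : ℝ} (ha : 0 < a) (hca : 3 ≤ c * a ^ 2)
    (hx : 0 < x) : a * x * (c + x ^ 2) < 2 * c * sinh (a * x) := by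
  have hc : 0 < c := pos_of_mul_pos_left (by linarith) (sq_nonneg a)
  have hsinh := Real.add_pow_three_div_six_le_sinh (mul_pos ha hx).le
  have hcubic : 0 ≤ a * x ^ 3 * (c * a ^ 2 - 3) := by
    have := sub_nonneg.2 hca
    positivity
  have hlinear : 0 < a * c * x := by positivity
  nlinarith

theorem one_add_exp_neg_two_mul (u : ℝ) : 1 + exp (-(2 * u)) = 2 * exp (-u) * cosh u := by
  rw [cosh_eq, show -(2 * u) = -u + -u by ring, exp_add, exp_neg u]
  field_simp

theorem one_sub_exp_neg_two_mul (u : ℝ) : 1 - exp (-(2 * u)) = 2 * exp (-u) * sinh u := by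
  rw [sinh_eq, show -(2 * u) = -u + -u by ring, exp_add, exp_neg u]
  field_simp

theorem hasDerivAt_sq_mul_cosh_div (a c x : ℝ) (hD : (c + x ^ 2) * sinh (a * x / 2) ≠ 0) :
    HasDerivAt (fun y => y ^ 2 * cosh (a * y / 2) / ((c + y ^ 2) * sinh (a * y / 2)))
      (x * (2 * c * sinh (a * x) - a * x * (c + x ^ 2)) /
        (2 * ((c + x ^ 2) * sinh (a * x / 2)) ^ 2)) x := by
  have hu : HasDerivAt (fun y => a * y / 2) (a / 2) x := by
    simpa using ((hasDerivAt_id x).const_mul a).div_const 2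
  have hN := (hasDerivAt_pow 2 x).fun_mul hu.cosh
  have hD' := ((hasDerivAt_const x c).fun_add (hasDerivAt_pow 2 x)).fun_mul hu.sinh
  refine (hN.fun_div hD' hD).congr_deriv ?_
  rw [show sinh (a * x) = 2 * sinh (a * x / 2) * cosh (a * x / 2) by
    rw [← sinh_two_mul]; ring_nf]
  rw [div_eq_div_iff (pow_ne_zero 2 hD) (by simpa using hD)]
  norm_num
  linear_combination (-(a * x ^ 2 * (c + x ^ 2) ^ 3 * sinh (a * x / 2) ^ 2)) * cosh_sq (a * x / 2)

theorem strictMonoOn_sq_mul_cosh_div {a c : ℝ} (ha : 0 < a) (hca : 3 ≤ c * a ^ 2) :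
    StrictMonoOn (fun x => x ^ 2 * cosh (a * x / 2) / ((c + x ^ 2) * sinh (a * x / 2)))
      (Ioi 0) := by
  have hc : 0 < c := pos_of_mul_pos_left (by linarith) (sq_nonneg a)
  have hD : ∀ x ∈ Ioi (0 : ℝ), 0 < (c + x ^ 2) * sinh (a * x / 2) := by
    rintro x (hx : 0 < x)
    exact mul_pos (by positivity) (sinh_pos_iff.2 (by positivity))
  have hderiv := fun x hx => hasDerivAt_sq_mul_cosh_div a c x (hD x hx).ne'
  refine strictMonoOn_of_hasDerivWithinAt_pos (convex_Ioi 0)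
    (fun x hx => (hderiv x hx).continuousAt.continuousWithinAt)
    (fun x hx => (hderiv x (interior_subset hx)).hasDerivWithinAt) (fun x hx => ?_)
  rw [interior_Ioi] at hx
  have hsinh := mul_add_sq_lt_two_mul_mul_sinh ha hca hx
  exact div_pos (mul_pos hx (by linarith)) (by have := hD x hx; positivity)

theorem stmt3_general (k : ℕ) (hk : 0 < k)
    (Z : ℝ → ℝ)
    (hZ : ∀ X : ℝ, 0 < X →
      Z X = X ^ 2 * (1 + Real.exp (-(Real.pi * X))) /
        (((k : ℝ) ^ 2 + X ^ 2) * (1 - Real.exp (-(Real.pi * X))))) :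
    StrictMonoOn Z (Set.Ioi 0) := by
  have hk2 : 3 ≤ (k : ℝ) ^ 2 * π ^ 2 :=
    calc (3 : ℝ) ≤ 1 ^ 2 * 3 ^ 2 := by norm_num
      _ ≤ (k : ℝ) ^ 2 * π ^ 2 := by gcongr <;> [exact_mod_cast hk; exact pi_gt_three.le]
  refine (strictMonoOn_sq_mul_cosh_div pi_pos hk2).congr fun X hX => ?_
  rw [hZ X hX, show π * X = 2 * (π * X / 2) by ring, one_add_exp_neg_two_mul,
    one_sub_exp_neg_two_mul, mul_left_comm, mul_left_comm ((k : ℝ) ^ 2 + X ^ 2),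
    mul_div_mul_left _ _ (by positivity)]

theorem stmt3 (k : ℕ) (hk : 0 < k) (hodd : Odd k)
    (Z : ℝ → ℝ)
    (hZ : ∀ X : ℝ, 0 < X →
      Z X = X ^ 2 * (1 + Real.exp (-(Real.pi * X))) /
        (((k : ℝ) ^ 2 + X ^ 2) * (1 - Real.exp (-(Real.pi * X))))) :
    StrictMonoOn Z (Set.Ioi 0) :=
  stmt3_general k hk Z hZ
end

section
/- Let σ > 1 and μ ∈ [0,1). For Z ∈ [0,1], define δ(Z) = 1 − (μ/σ)Z − ((σ−1)/σ)Z^2, A(Z) = [1 + (μ/(σ−1))Z − (1 + μ²/(σ−1))Z²]/δ(Z), and B(Z) = −(μZ − 1)²/δ(Z). Then A(Z) > 0 and B(Z) < 0 for all Z ∈ [0, 1], except that A(1) ≥ 0 reduces to A(1) = (μ/(σ−1))(1−μ)/δ(1) > 0 when μ > 0. -/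
open Set

theorem stmt5 (σ μ : ℝ) (hσ : 1 < σ) (hμ : μ ∈ Set.Ico (0 : ℝ) 1)
    (δ A B : ℝ → ℝ)
    (hδ : ∀ Z, δ Z = 1 - (μ / σ) * Z - ((σ - 1) / σ) * Z ^ 2)
    (hA : ∀ Z, A Z = (1 + (μ / (σ - 1)) * Z - (1 + μ ^ 2 / (σ - 1)) * Z ^ 2) / δ Z)
    (hB : ∀ Z, B Z = -(μ * Z - 1) ^ 2 / δ Z) :
    (∀ Z ∈ Set.Ico (0 : ℝ) 1, A Z > 0 ∧ B Z < 0) ∧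
    B 1 < 0 ∧
    (0 < μ → A 1 = (μ / (σ - 1)) * (1 - μ) / δ 1 ∧ A 1 > 0) := by
  obtain ⟨hμ0, hμ1⟩ := hμ
  have hσ0 : (0:ℝ) < σ := by linarith
  have hσ1 : (0:ℝ) < σ - 1 := by linarith
  have hσ1' : σ - 1 ≠ 0 := ne_of_gt hσ1
  have hδpos : ∀ Z, 0 ≤ Z → Z ≤ 1 → 0 < δ Z := by
    intro Z h0 h1
    rw [hδ, show (1:ℝ) - μ / σ * Z - (σ - 1) / σ * Z ^ 2 = (σ - μ * Z - (σ - 1) * Z ^ 2) / σ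
      from by field_simp]
    apply div_pos _ hσ0
    nlinarith [mul_nonneg hσ1.le (show (0:ℝ) ≤ 1 - Z ^ 2 by nlinarith),
      mul_nonneg hμ0 (show (0:ℝ) ≤ 1 - Z by linarith)]
  have hsq : ∀ Z, 0 ≤ Z → Z ≤ 1 → 0 < (μ * Z - 1) ^ 2 := by
    intro Z h0 h1
    exact pow_two_pos_of_ne_zero (by nlinarith)
  have hBneg : ∀ Z, 0 ≤ Z → Z ≤ 1 → B Z < 0 := by
    intro Z h0 h1
    rw [hB, neg_div]
    exact neg_neg_of_pos (div_pos (hsq Z h0 h1) (hδpos Z h0 h1))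
  refine ⟨?_, hBneg 1 zero_le_one le_rfl, ?_⟩
  · intro Z hZ
    obtain ⟨h0, h1⟩ := hZ
    refine ⟨?_, hBneg Z h0 h1.le⟩
    rw [hA]
    apply div_pos _ (hδpos Z h0 h1.le)
    have hnum : 0 < (1 + μ / (σ - 1) * Z - (1 + μ ^ 2 / (σ - 1)) * Z ^ 2) * (σ - 1) := by
      have : (1 + μ / (σ - 1) * Z - (1 + μ ^ 2 / (σ - 1)) * Z ^ 2) * (σ - 1)
          = (σ - 1) * (1 - Z ^ 2) + μ * Z * (1 - μ * Z) := by
        field_simp; ring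
      rw [this]
      have h2 : μ * Z < 1 := by nlinarith
      have h12 : (0:ℝ) < 1 - Z ^ 2 := by nlinarith
      exact add_pos_of_pos_of_nonneg (mul_pos hσ1 h12)
        (mul_nonneg (mul_nonneg hμ0 h0) (by linarith))
    nlinarith
  · intro hμpos
    have heq : A 1 = μ / (σ - 1) * (1 - μ) / δ 1 := by
      rw [hA]
      congr 1
      field_simp; ring
    refine ⟨heq, ?_⟩
    rw [heq]
    apply div_pos _ (hδpos 1 zero_le_one le_rfl)
    apply mul_pos (div_pos hμpos hσ1)
    linarith
end

section
/- Let σ > 1, μ ∈ (0,1) with σ(1−μ) > 1, let ρ > 0, and let k be a nonzero integer. Define Z_k(τ) = α²ρ²(1−(−1)^k e^{−αρπ})/((k²+α²ρ²)(1−e^{−αρπ})) with α = (σ−1)τ, and Z* = μ(2σ−1)/(σ(1+μ²)−1). Then there exists a unique τ*_k > 0 such that Z_k(τ*_k) = Z*. -/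
/-!
Put `t = (σ - 1) ρ τ`, `K = k²` and `ε = (-1)^k`; then `Z_k(τ)` is `t² (1 - ε e^{-πt}) / ((K + t²)(1 - e^{-πt}))`.
For `K ≥ 1` and `|ε| ≤ 1` this is strictly increasing in `t > 0`: the numerator of its derivative is affine
in `ε`, positive at `ε = 1` for trivial reasons and at `ε = -1` because `π t (K + t²) < 2 K sinh (π t)`
(compare with `sinh x > x + x³/6`, using `K π² > 3`). It is below `4t` near `0` and above `t² / (K + t²)`,
so it takes every value of `(0, 1)`, and `Z*` lies in `(0, 1)` because of the no-black-hole condition.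
-/

open Real Set

theorem IsPreconnected.existsUnique_eq_of_injOn {X α : Type*} [TopologicalSpace X] [LinearOrder α]
    [TopologicalSpace α] [OrderClosedTopology α] {s : Set X} {f : X → α} (hs : IsPreconnected s)
    (hf : ContinuousOn f s) (hinj : InjOn f s) {a b : X} (ha : a ∈ s) (hb : b ∈ s) {y : α}
    (hy : y ∈ Icc (f a) (f b)) : ∃! x, x ∈ s ∧ f x = y := by
  obtain ⟨x, hxs, hfx⟩ := hs.intermediate_value ha hb hf hy
  exact ⟨x, ⟨hxs, hfx⟩, fun x' ⟨hx's, hfx'⟩ => hinj hx's hxs (hfx'.trans hfx.symm)⟩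

lemma Real.add_pow_three_div_six_lt_sinh {x : ℝ} (hx : 0 < x) : x + x ^ 3 / 6 < sinh x := by
  have h := sum_le_hasSum (Finset.range 3) (fun n _ => by positivity) (hasSum_sinh x)
  simp only [Finset.sum_range_succ, Finset.sum_range_zero, Nat.factorial] at h
  norm_num at h
  linarith [pow_pos hx 5]

lemma pi_mul_mul_add_sq_lt_two_mul_sinh {K t : ℝ} (hK : 1 ≤ K) (ht : 0 < t) :
    π * t * (K + t ^ 2) < 2 * K * sinh (π * t) := by
  have hsinh := add_pow_three_div_six_lt_sinh (mul_pos pi_pos ht)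
  have hKπ : 3 ≤ K * π ^ 2 := by nlinarith [pi_gt_three]
  have hcube : 0 ≤ (K * π ^ 2 - 3) * (π * t ^ 3) := mul_nonneg (by linarith) (by positivity)
  nlinarith [mul_lt_mul_of_pos_left hsinh (by positivity : (0 : ℝ) < 2 * K),
    mul_pos (mul_pos pi_pos ht) (by linarith : (0 : ℝ) < K)]

noncomputable def modeRatio (K ε t : ℝ) : ℝ :=
  t ^ 2 * (1 - ε * exp (-(π * t))) / ((K + t ^ 2) * (1 - exp (-(π * t))))

section modeRatio

variable {K ε t : ℝ}

lemma exp_neg_pi_mul_lt_one (ht : 0 < t) : exp (-(π * t)) < 1 :=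
  exp_lt_one_iff.2 (neg_neg_of_pos (mul_pos pi_pos ht))

lemma hasDerivAt_modeRatio (hK : 0 < K) (ht : 0 < t) :
    HasDerivAt (modeRatio K ε)
      ((2 * t * K * (1 - exp (-(π * t))) * (1 - ε * exp (-(π * t))) -
          (1 - ε) * (K + t ^ 2) * π * t ^ 2 * exp (-(π * t))) /
        ((K + t ^ 2) * (1 - exp (-(π * t)))) ^ 2) t := by
  have hu : HasDerivAt (fun s => exp (-(π * s))) (exp (-(π * t)) * -π) t :=
    ((hasDerivAt_id t).const_mul π).neg.exp.congr_deriv (by simp)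
  have hN := (hasDerivAt_pow 2 t).mul ((hasDerivAt_const t 1).sub (hu.const_mul ε))
  have hD := ((hasDerivAt_const t K).add (hasDerivAt_pow 2 t)).mul ((hasDerivAt_const t 1).sub hu)
  have hD0 : (K + t ^ 2) * (1 - exp (-(π * t))) ≠ 0 :=
    (mul_pos (by positivity) (sub_pos.2 (exp_neg_pi_mul_lt_one ht))).ne'
  refine (hN.div hD hD0).congr_deriv ?_
  simp only [Pi.mul_apply, Pi.add_apply, Pi.sub_apply]
  push_cast
  ring

lemma continuousOn_modeRatio (hK : 0 < K) : ContinuousOn (modeRatio K ε) (Ioi 0) :=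
  fun _ ht => (hasDerivAt_modeRatio hK ht).continuousAt.continuousWithinAt

lemma strictMonoOn_modeRatio (hK : 1 ≤ K) (hε : ε ∈ Icc (-1) 1) :
    StrictMonoOn (modeRatio K ε) (Ioi 0) := by
  have hK0 : 0 < K := one_pos.trans_le hK
  refine strictMonoOn_of_deriv_pos (convex_Ioi 0) (continuousOn_modeRatio hK0) fun t ht => ?_
  rw [interior_Ioi, mem_Ioi] at ht
  rw [(hasDerivAt_modeRatio hK0 ht).deriv]
  set u := exp (-(π * t)) with hu_def
  have hu0 : 0 < u := exp_pos _
  have hu1 : u < 1 := exp_neg_pi_mul_lt_one ht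
  refine div_pos ?_ (pow_pos (mul_pos (by positivity) (sub_pos.2 hu1)) 2)
  have hpos_one : 0 < 2 * t * K * (1 - u) * (1 - u) := by
    have := sub_pos.2 hu1
    positivity
  have hsq : 1 - u ^ 2 = 2 * u * sinh (π * t) := by
    have hinv : u * exp (π * t) = 1 := by rw [hu_def, ← exp_add]; simp
    rw [sinh_eq]
    linear_combination -hinv
  have hpos_neg_one : 0 < 2 * t * K * (1 - u) * (1 + u) - 2 * (K + t ^ 2) * π * t ^ 2 * u := by
    have key := pi_mul_mul_add_sq_lt_two_mul_sinh hK ht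
    have : 2 * t * K * (1 - u) * (1 + u) - 2 * (K + t ^ 2) * π * t ^ 2 * u =
        2 * t * u * (2 * K * sinh (π * t) - π * t * (K + t ^ 2)) := by
      linear_combination 2 * t * K * hsq
    rw [this]
    exact mul_pos (by positivity) (sub_pos.2 key)
  -- the numerator is affine in `ε`, hence positive between its two positive endpoint values
  obtain ⟨hε₁, hε₂⟩ := hε
  rcases le_total (2 * t * K * (1 - u) * (1 - u))
    (2 * t * K * (1 - u) * (1 + u) - 2 * (K + t ^ 2) * π * t ^ 2 * u) with h | h
  · nlinarith [mul_nonneg (sub_nonneg.2 hε₂) (sub_nonneg.2 h)]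
  · nlinarith [mul_nonneg (neg_le_iff_add_nonneg'.1 hε₁) (sub_nonneg.2 h)]

lemma sq_div_add_sq_le_modeRatio (hK : 0 < K) (hε : ε ≤ 1) (ht : 0 < t) :
    t ^ 2 / (K + t ^ 2) ≤ modeRatio K ε t := by
  have hu0 : 0 < exp (-(π * t)) := exp_pos _
  have hu1 := exp_neg_pi_mul_lt_one ht
  rw [modeRatio, div_le_div_iff₀ (by positivity) (mul_pos (by positivity) (sub_pos.2 hu1))]
  nlinarith [mul_pos (mul_pos (pow_pos ht 2) (by positivity : (0 : ℝ) < K + t ^ 2)) hu0]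

lemma modeRatio_lt_four_mul (hK : 1 ≤ K) (hε : -1 ≤ ε) (ht : 0 < t) (ht1 : t ≤ 1) :
    modeRatio K ε t < 4 * t := by
  set u := exp (-(π * t)) with hu_def
  have hu0 : 0 < u := exp_pos _
  have hu1 : u < 1 := exp_neg_pi_mul_lt_one ht
  rw [modeRatio, div_lt_iff₀ (mul_pos (by positivity) (sub_pos.2 hu1))]
  -- `e^{πt} ≥ 1 + πt` gives `1 - u ≥ πt / (1 + πt) > t / 2` for `t ≤ 1`
  have hexp : u * (1 + π * t) ≤ 1 := by
    have hinv : u * exp (π * t) = 1 := by rw [hu_def, ← exp_add]; simp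
    calc u * (1 + π * t) ≤ u * exp (π * t) := by
          gcongr
          linarith [add_one_le_exp (π * t)]
      _ = 1 := hinv
  have hhalf : t < 2 * (1 - u) := by nlinarith [pi_gt_three, mul_pos ht pi_pos]
  have hnum : t ^ 2 * (1 - ε * u) ≤ 2 * t ^ 2 := by nlinarith [mul_pos (pow_pos ht 2) hu0]
  nlinarith [mul_pos ht (sub_pos.2 hhalf), mul_nonneg (mul_nonneg (sub_nonneg.2 hK) ht.le) (sub_pos.2 hu1).le,
    mul_nonneg (pow_pos ht 3).le (sub_pos.2 hu1).le]

lemma exists_pos_modeRatio_lt (hK : 1 ≤ K) (hε : -1 ≤ ε) {y : ℝ} (hy : 0 < y) :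
    ∃ t, 0 < t ∧ modeRatio K ε t < y := by
  refine ⟨min 1 (y / 4), lt_min one_pos (by positivity), ?_⟩
  have := modeRatio_lt_four_mul (t := min 1 (y / 4)) hK hε (lt_min one_pos (by positivity)) (min_le_left _ _)
  linarith [min_le_right 1 (y / 4)]

lemma exists_pos_lt_modeRatio (hK : 1 ≤ K) (hε : ε ≤ 1) {y : ℝ} (hy : y ∈ Ioo 0 1) :
    ∃ t, 0 < t ∧ y < modeRatio K ε t := by
  obtain ⟨hy0, hy1⟩ := hy
  have ht : 0 < (K + 1) / (1 - y) := div_pos (by linarith) (by linarith)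
  refine ⟨(K + 1) / (1 - y), ht, lt_of_lt_of_le ?_ (sq_div_add_sq_le_modeRatio (by linarith) hε ht)⟩
  rw [lt_div_iff₀ (by positivity), div_pow]
  have hsq : (K + 1) ^ 2 / (1 - y) ^ 2 * (1 - y) = (K + 1) ^ 2 / (1 - y) := by
    field_simp [(by linarith : (1 - y) ≠ 0)]
  have hge : (K + 1) ^ 2 ≤ (K + 1) ^ 2 / (1 - y) :=
    le_div_self (by positivity) (by linarith) (by linarith)
  nlinarith

lemma existsUnique_pos_modeRatio_mul_eq (hK : 1 ≤ K) (hε : ε ∈ Icc (-1) 1) {c y : ℝ} (hc : 0 < c)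
    (hy : y ∈ Ioo 0 1) : ∃! τ, 0 < τ ∧ modeRatio K ε (c * τ) = y := by
  obtain ⟨a, ha, hfa⟩ := exists_pos_modeRatio_lt hK hε.1 hy.1
  obtain ⟨b, hb, hfb⟩ := exists_pos_lt_modeRatio hK hε.2 hy
  have hmaps : MapsTo (c * ·) (Ioi 0) (Ioi 0) := fun τ hτ => mul_pos hc hτ
  have hscale (x : ℝ) : c * (x / c) = x := mul_div_cancel₀ x hc.ne'
  refine isPreconnected_Ioi.existsUnique_eq_of_injOn (a := a / c) (b := b / c)
    ((continuousOn_modeRatio (one_pos.trans_le hK)).comp (by fun_prop) hmaps)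
    ((strictMonoOn_modeRatio hK hε).injOn.comp (mul_right_injective₀ hc.ne').injOn hmaps)
    (div_pos ha hc) (div_pos hb hc) ?_
  simp only [Function.comp_apply, hscale]
  exact ⟨hfa.le, hfb.le⟩

end modeRatio

lemma mul_two_mul_sub_one_div_mem_Ioo {σ μ : ℝ} (hμ : μ ∈ Ioo 0 1) (hnbh : 1 < σ * (1 - μ)) :
    μ * (2 * σ - 1) / (σ * (1 + μ ^ 2) - 1) ∈ Ioo 0 1 := by
  obtain ⟨hμ0, hμ1⟩ := hμ
  have hσ : 1 < σ := by nlinarith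
  have hden : 0 < σ * (1 + μ ^ 2) - 1 := by nlinarith
  refine ⟨div_pos (by nlinarith) hden, (div_lt_one hden).2 ?_⟩
  -- the gap is `(1 - μ) (σ (1 - μ) - 1)`
  nlinarith [mul_pos (sub_pos.2 hμ1) (sub_pos.2 hnbh)]

theorem stmt14 (σ μ ρ : ℝ) (hσ : 1 < σ) (hμ : μ ∈ Set.Ioo (0 : ℝ) 1)
    (hnbh : 1 < σ * (1 - μ)) (hρ : 0 < ρ) (k : ℤ) (hk : k ≠ 0)
    (Z : ℝ → ℝ)
    (hZ : ∀ τ : ℝ,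
      Z τ = ((σ - 1) * τ) ^ 2 * ρ ^ 2 *
          (1 - (-1 : ℝ) ^ k * Real.exp (-((σ - 1) * τ * ρ * Real.pi))) /
        (((k : ℝ) ^ 2 + ((σ - 1) * τ) ^ 2 * ρ ^ 2) *
          (1 - Real.exp (-((σ - 1) * τ * ρ * Real.pi)))))
    (Zstar : ℝ) (hZstar : Zstar = μ * (2 * σ - 1) / (σ * (1 + μ ^ 2) - 1)) :
    ∃! τ : ℝ, 0 < τ ∧ Z τ = Zstar := by
  have hK : 1 ≤ (k : ℝ) ^ 2 := by
    rw [one_le_sq_iff_one_le_abs, ← Int.cast_abs]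
    exact_mod_cast Int.one_le_abs hk
  have hε : (-1 : ℝ) ^ k ∈ Icc (-1) 1 := abs_le.1 (abs_neg_one_zpow k).le
  have hZ_eq : Z = fun τ => modeRatio ((k : ℝ) ^ 2) ((-1) ^ k) ((σ - 1) * ρ * τ) := by
    ext τ
    rw [hZ, modeRatio, show π * ((σ - 1) * ρ * τ) = (σ - 1) * τ * ρ * π by ring]
    ring
  subst hZ_eq hZstar
  exact existsUnique_pos_modeRatio_mul_eq hK hε (mul_pos (sub_pos.2 hσ) hρ)
    (mul_two_mul_sub_one_div_mem_Ioo hμ hnbh)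
end
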